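/- arXiv:1804.05509 — 2 statements merged into one kernel-verified Lean document; each statement's English description precedes it below -/
import Mathlib

section
/- Let $X_1,\dots,X_n$ be i.i.d. random variables in a measurable space $S$, let $f: S^d \to \mathbb{R}$ with $f(X_1,\dots,X_d)$ integrable and mean $\mu$. Define $f_j(x) := \mathbb{E} f(X_1,\dots,X_{j-1},x,X_{j+1},\dots,X_d) - \mu$ and $f_*(x_1,\dots,x_d) := f(x_1,\dots,x_d) - \mu - \sum_{j=1}^d f_j(x_j)$. Then the U-statistic $U_n(f) := \sum_{1 \le i_1 < \dots < i_d \le n} f(X_{i_1},\dots,X_{i_d})$ decomposes as $U_n(f) = \binom{n}{d}\mu + \sum_{j=1}^d \sum_{i=1}^n \binom{i-1}{j-1}\binom{n-i}{d-j} f_j(X_i) + U_n(f_*)$. -/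
open MeasureTheory ProbabilityTheory Finset

/-- The asymmetric U-statistic `U_n(f) = ∑_{i_1 < ⋯ < i_d ≤ n} f(X_{i_1},…,X_{i_d})`
(indices `0`-based: the sum is over `d`-subsets of `{0,…,n-1}` listed increasingly). -/
noncomputable def Ustat {S : Type*} (d n : ℕ) (f : (Fin d → S) → ℝ) (X : ℕ → S) : ℝ :=
  ∑ s ∈ ((Finset.range n).powersetCard d).attach,
    f (fun k => X (s.1.orderIsoOfFin (Finset.mem_powersetCard.mp s.2).2 k))

/-- The mean `μ = E f(X_1,…,X_d)`. -/
noncomputable def meanF {Ω S : Type*} [MeasurableSpace Ω] (μ : Measure Ω) (d : ℕ)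
    (f : (Fin d → S) → ℝ) (X : ℕ → Ω → S) : ℝ :=
  ∫ ω, f (fun k => X k ω) ∂μ

/-- The first-order projection `f_j(x) = E f(X_1,…,X_{j-1},x,X_{j+1},…,X_d) - μ`. -/
noncomputable def proj {Ω S : Type*} [MeasurableSpace Ω] (μ : Measure Ω) (d : ℕ)
    (f : (Fin d → S) → ℝ) (X : ℕ → Ω → S) (j : Fin d) (x : S) : ℝ :=
  (∫ ω, f (Function.update (fun k => X k ω) j x) ∂μ) - meanF μ d f X


/-! The identity is linear in `f`, and pointwise `f = μ + ∑ⱼ fⱼ(xⱼ) + f_*`, so it suffices to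
evaluate `Uₙ` on a constant, which gives `C(n,d)` copies of it, and on `x ↦ ∑ⱼ hⱼ(xⱼ)`. An index
`i` is the `j`-th smallest element of a `d`-subset `s` exactly when `s` consists of `i`, `j`
indices below `i` and `d - 1 - j` indices above it; with `0`-based indices there are
`C(i,j) C(n-1-i,d-1-j)` such subsets. -/

namespace Finset

variable {α : Type*} [LinearOrder α]

lemma card_filter_lt_orderEmbOfFin (s : Finset α) {d : ℕ} (h : #s = d) (j : Fin d) :
    #{x ∈ s | x < s.orderEmbOfFin h j} = j := by
  have himage :
      {x ∈ s | x < s.orderEmbOfFin h j} = (Iio j).map (s.orderEmbOfFin h).toEmbedding := by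
    ext x
    simp only [mem_filter, mem_map, mem_Iio, RelEmbedding.coe_toEmbedding]
    constructor
    · rintro ⟨hx, hlt⟩
      obtain ⟨k, rfl⟩ : x ∈ Set.range (s.orderEmbOfFin h) := by simpa using hx
      exact ⟨k, (s.orderEmbOfFin h).lt_iff_lt.mp hlt, rfl⟩
    · rintro ⟨k, hk, rfl⟩
      exact ⟨orderEmbOfFin_mem s h k, (s.orderEmbOfFin h).lt_iff_lt.mpr hk⟩
  rw [himage, card_map, Fin.card_Iio]

lemma orderEmbOfFin_eq_iff (s : Finset α) {d : ℕ} (h : #s = d) (j : Fin d) (i : α) :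
    s.orderEmbOfFin h j = i ↔ i ∈ s ∧ #{x ∈ s | x < i} = j := by
  constructor
  · rintro rfl
    exact ⟨orderEmbOfFin_mem s h j, card_filter_lt_orderEmbOfFin s h j⟩
  · rintro ⟨hi, hj⟩
    obtain ⟨k, rfl⟩ : i ∈ Set.range (s.orderEmbOfFin h) := by simpa using hi
    rw [card_filter_lt_orderEmbOfFin, Fin.val_inj] at hj
    rw [hj]

lemma insert_filter_lt_union_filter_gt {s : Finset α} {i : α} (hi : i ∈ s) :
    insert i ({x ∈ s | x < i} ∪ {x ∈ s | i < x}) = s := by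
  ext x; simp only [mem_insert, mem_union, mem_filter]; grind

lemma card_filter_lt_add_card_filter_gt {s : Finset α} {i : α} (hi : i ∈ s) :
    #{x ∈ s | x < i} + #{x ∈ s | i < x} + 1 = #s := by
  conv_rhs => rw [← insert_filter_lt_union_filter_gt hi]
  rw [card_insert_of_notMem (by simp), card_union_of_disjoint]
  exact disjoint_filter.mpr fun x _ h₁ h₂ => (h₁.trans h₂).false

lemma filter_insert_union_of_lt_of_gt {a b : Finset α} {i : α} (ha : ∀ x ∈ a, x < i)
    (hb : ∀ x ∈ b, i < x) :
    {x ∈ insert i (a ∪ b) | x < i} = a ∧ {x ∈ insert i (a ∪ b) | i < x} = b := by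
  constructor <;> ext x <;> simp only [mem_filter, mem_insert, mem_union] <;> grind

lemma card_powersetCard_filter_orderEmbOfFin_eq (t : Finset α) {d : ℕ} (j : Fin d) {i : α}
    (hi : i ∈ t) :
    #{s ∈ t.powersetCard d | i ∈ s ∧ #{x ∈ s | x < i} = j} =
      (#{x ∈ t | x < i}).choose j * (#{x ∈ t | i < x}).choose (d - 1 - j) := by
  rw [← card_powersetCard, ← card_powersetCard, ← card_product]
  refine card_nbij' (fun s => ({x ∈ s | x < i}, {x ∈ s | i < x}))
    (fun p => insert i (p.1 ∪ p.2)) ?_ ?_ ?_ ?_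
  · intro s hs
    simp only [coe_filter, mem_powersetCard] at hs
    obtain ⟨⟨hst, hsd⟩, his, hsj⟩ := hs
    have := card_filter_lt_add_card_filter_gt his
    simp only [coe_product, Set.mem_prod, mem_coe, mem_powersetCard]
    exact ⟨⟨filter_subset_filter _ hst, hsj⟩, filter_subset_filter _ hst, by omega⟩
  · rintro ⟨a, b⟩ hab
    simp only [coe_product, Set.mem_prod, mem_coe, mem_powersetCard] at hab
    obtain ⟨⟨ha, haj⟩, hb, hbj⟩ := hab
    have hlt : ∀ x ∈ a, x < i := fun x hx => (mem_filter.mp (ha hx)).2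
    have hgt : ∀ x ∈ b, i < x := fun x hx => (mem_filter.mp (hb hx)).2
    obtain ⟨hfa, hfb⟩ := filter_insert_union_of_lt_of_gt hlt hgt
    have hcard := card_filter_lt_add_card_filter_gt (mem_insert_self i (a ∪ b))
    rw [hfa, hfb] at hcard
    simp only [coe_filter, mem_powersetCard]
    refine ⟨⟨insert_subset hi (union_subset (ha.trans (filter_subset _ _))
      (hb.trans (filter_subset _ _))), by omega⟩, mem_insert_self i _, by rw [hfa, haj]⟩
  · intro s hs
    exact insert_filter_lt_union_filter_gt (mem_filter.mp hs).2.1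
  · rintro ⟨a, b⟩ hab
    simp only [coe_product, Set.mem_prod, mem_coe, mem_powersetCard] at hab
    obtain ⟨⟨ha, -⟩, hb, -⟩ := hab
    exact Prod.ext_iff.mpr (filter_insert_union_of_lt_of_gt
      (fun x hx => (mem_filter.mp (ha hx)).2) (fun x hx => (mem_filter.mp (hb hx)).2))

lemma sum_attach_powersetCard_orderEmbOfFin {M : Type*} [AddCommMonoid M] (t : Finset α) {d : ℕ}
    (j : Fin d) (g : α → M) :
    ∑ s ∈ (t.powersetCard d).attach, g (s.1.orderEmbOfFin (mem_powersetCard.mp s.2).2 j) =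
      ∑ i ∈ t, ((#{x ∈ t | x < i}).choose j * (#{x ∈ t | i < x}).choose (d - 1 - j)) • g i := by
  calc ∑ s ∈ (t.powersetCard d).attach, g (s.1.orderEmbOfFin (mem_powersetCard.mp s.2).2 j)
      = ∑ s ∈ (t.powersetCard d).attach,
          ∑ i ∈ t, if i ∈ s.1 ∧ #{x ∈ s.1 | x < i} = j then g i else 0 := by
        refine sum_congr rfl fun s _ => ?_
        obtain ⟨hst, hsd⟩ := mem_powersetCard.mp s.2
        simp only [← orderEmbOfFin_eq_iff s.1 hsd]
        rw [sum_ite_eq, if_pos (hst (orderEmbOfFin_mem _ _ _))]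
    _ = ∑ i ∈ t, ∑ s ∈ t.powersetCard d, if i ∈ s ∧ #{x ∈ s | x < i} = j then g i else 0 :=
        (sum_attach _ fun s => ∑ i ∈ t, if i ∈ s ∧ #{x ∈ s | x < i} = j then g i else 0).trans
          sum_comm
    _ = _ := by
        refine sum_congr rfl fun i hi => ?_
        rw [← sum_filter, sum_const, card_powersetCard_filter_orderEmbOfFin_eq t j hi]

end Finset

lemma Ustat_add {S : Type*} (d n : ℕ) (f g : (Fin d → S) → ℝ) (X : ℕ → S) :
    Ustat d n (fun x => f x + g x) X = Ustat d n f X + Ustat d n g X :=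
  sum_add_distrib

lemma Ustat_const {S : Type*} (d n : ℕ) (c : ℝ) (X : ℕ → S) :
    Ustat d n (fun _ => c) X = n.choose d * c := by
  rw [Ustat, sum_const, card_attach, card_powersetCard, card_range, nsmul_eq_mul]

lemma Ustat_sum_coord {S : Type*} (d n : ℕ) (h : Fin d → S → ℝ) (X : ℕ → S) :
    Ustat d n (fun x => ∑ j, h j (x j)) X =
      ∑ j : Fin d, ∑ i ∈ range n,
        ((i.choose j * (n - 1 - i).choose (d - 1 - j) : ℕ) : ℝ) * h j (X i) := by
  simp only [Ustat, coe_orderIsoOfFin_apply]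
  rw [sum_comm]
  refine sum_congr rfl fun j _ => ?_
  rw [sum_attach_powersetCard_orderEmbOfFin (range n) j (fun i => h j (X i))]
  refine sum_congr rfl fun i hi => ?_
  have hin := mem_range.mp hi
  have hlt : {x ∈ range n | x < i} = range i := by
    ext; simp only [mem_filter, mem_range]; omega
  have hgt : {x ∈ range n | i < x} = Ioo i n := by
    ext; simp only [mem_filter, mem_range, mem_Ioo]; omega
  rw [hlt, hgt, card_range, Nat.card_Ioo, nsmul_eq_mul, Nat.sub_right_comm]

theorem hoeffding_decomposition_general {Ω S : Type*} [MeasurableSpace Ω]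
    (μ : Measure Ω) (X : ℕ → Ω → S)
    (d n : ℕ) (f : (Fin d → S) → ℝ) :
    ∀ ω : Ω,
      Ustat d n f (fun i => X i ω) =
        (Nat.choose n d : ℝ) * meanF μ d f X
          + ∑ j : Fin d, ∑ i ∈ Finset.range n,
              ((Nat.choose i j.val * Nat.choose (n - 1 - i) (d - 1 - j.val) : ℕ) : ℝ)
                * proj μ d f X j (X i ω)
          + Ustat d n
              (fun x => f x - meanF μ d f X - ∑ j : Fin d, proj μ d f X j (x j))
              (fun i => X i ω) := by
  intro ω
  rw [← Ustat_const, ← Ustat_sum_coord, ← Ustat_add, ← Ustat_add]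
  congr 1
  funext x
  ring

/-- Hoeffding's decomposition for asymmetric U-statistics:
`U_n(f) = C(n,d) μ + ∑_{j=1}^d ∑_{i=1}^n C(i-1,j-1) C(n-i,d-j) f_j(X_i) + U_n(f_*)`,
where `f_*(x_1,…,x_d) = f(x_1,…,x_d) - μ - ∑_j f_j(x_j)`. -/
theorem hoeffding_decomposition {Ω S : Type*} [MeasurableSpace Ω] [MeasurableSpace S]
    (μ : Measure Ω) [IsProbabilityMeasure μ] (X : ℕ → Ω → S)
    (hmeas : ∀ i, Measurable (X i))
    (hindep : iIndepFun X μ)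
    (hident : ∀ i, IdentDistrib (X i) (X 0) μ μ)
    (d n : ℕ) (hd : 1 ≤ d) (f : (Fin d → S) → ℝ)
    (hint : Integrable (fun ω => f (fun k => X k ω)) μ) :
    ∀ ω : Ω,
      Ustat d n f (fun i => X i ω) =
        (Nat.choose n d : ℝ) * meanF μ d f X
          + ∑ j : Fin d, ∑ i ∈ Finset.range n,
              ((Nat.choose i j.val * Nat.choose (n - 1 - i) (d - 1 - j.val) : ℕ) : ℝ)
                * proj μ d f X j (X i ω)
          + Ustat d n
              (fun x => f x - meanF μ d f X - ∑ j : Fin d, proj μ d f X j (x j))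
              (fun i => X i ω) :=
  hoeffding_decomposition_general μ X d n f
end

section
/- Let $p, q \ge 1$ and suppose for each $x \ge 1$ that $V(x) \ge 0$ is a random variable and $v(x) > 0$, $0 < h(x) \le 1$ are deterministic. If for every $r \ge 1$ there is a constant $K_r$ with $\mathbb{E}|V(x) - v(x)|^r \le K_r\, v(x)^r h(x)^r$ for all $x \ge 1$, then there is a constant $K_{p,q}$ with $\mathbb{E}|V(x)^q - v(x)^q|^p \le K_{p,q}\, v(x)^{pq} h(x)^p$ for all $x \ge 1$. -/
open MeasureTheory
open scoped ENNReal

theorem lintegral_comp_add_le {Ω : Type*} [MeasurableSpace Ω] (μ : Measure Ω)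
    (W : Ω → ℝ≥0∞) (G1 G2 : ℝ≥0∞ → ℝ≥0∞) (h1 : Monotone G1) (h2 : Monotone G2)
    (hc : Continuous fun t => G1 t + G2 t) (htop : G1 ⊤ + G2 ⊤ = ⊤) :
    ∫⁻ ω, (G1 (W ω) + G2 (W ω)) ∂μ
      ≤ (∫⁻ ω, G1 (W ω) ∂μ) + ∫⁻ ω, G2 (W ω) ∂μ := by
  set T : ℝ≥0∞ → ℝ≥0∞ := fun t => G1 t + G2 t with hT
  set S : ℝ≥0∞ → ℝ≥0∞ := fun y => sInf {t | y ≤ T t} with hS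
  have hS_le : ∀ y t, y ≤ T t → S y ≤ t := fun y t ht => sInf_le ht
  have hTS : ∀ y, y ≤ T (S y) := by
    intro y
    have hne : ({t | y ≤ T t}).Nonempty := ⟨⊤, by simp [hT, htop]⟩
    have hcl : IsClosed {t | y ≤ T t} := isClosed_Ici.preimage hc
    exact hcl.sInf_mem hne
  rw [show (fun ω => G1 (W ω) + G2 (W ω)) = fun ω => T (W ω) from rfl, lintegral]
  refine iSup₂_le fun φ hφ => ?_
  set ψ1 := φ.map (fun y => G1 (S y)) with hψ1
  set ψ2 := φ.map (fun y => G2 (S y)) with hψ2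
  have hφle : ∀ ω, φ ω ≤ ψ1 ω + ψ2 ω := by
    intro ω
    simp only [hψ1, hψ2, SimpleFunc.map_apply]
    exact hTS (φ ω)
  have h1le : (⇑ψ1 : Ω → ℝ≥0∞) ≤ fun ω => G1 (W ω) := by
    intro ω
    simp only [hψ1, SimpleFunc.map_apply]
    exact h1 (hS_le _ _ (hφ ω))
  have h2le : (⇑ψ2 : Ω → ℝ≥0∞) ≤ fun ω => G2 (W ω) := by
    intro ω
    simp only [hψ2, SimpleFunc.map_apply]
    exact h2 (hS_le _ _ (hφ ω))
  calc φ.lintegral μ ≤ (ψ1 + ψ2).lintegral μ :=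
        SimpleFunc.lintegral_mono (fun ω => hφle ω) le_rfl
    _ = ψ1.lintegral μ + ψ2.lintegral μ := SimpleFunc.add_lintegral ψ1 ψ2
    _ ≤ (∫⁻ ω, G1 (W ω) ∂μ) + ∫⁻ ω, G2 (W ω) ∂μ := by
        gcongr
        · rw [← SimpleFunc.lintegral_eq_lintegral]; exact lintegral_mono h1le
        · rw [← SimpleFunc.lintegral_eq_lintegral]; exact lintegral_mono h2le

theorem key_step1 (q v V : ℝ) (hq : 1 ≤ q) (hv : 0 < v) (hV : 0 ≤ V) :
    |V ^ q - v ^ q| ≤ q * 2 ^ (q - 1) * v ^ (q - 1) * |V - v| + 2 ^ q * |V - v| ^ q := by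
  rcases le_or_gt V (2 * v) with h2v | h2v
  · have hB : (0:ℝ) ≤ 2 ^ q * |V - v| ^ q := by positivity
    have hmvt : |V ^ q - v ^ q| ≤ (q * (2 * v) ^ (q - 1)) * |V - v| := by
      have hderiv : ∀ x ∈ Set.Icc (0:ℝ) (2 * v),
          HasDerivWithinAt (fun x : ℝ => x ^ q) (q * x ^ (q - 1)) (Set.Icc 0 (2 * v)) x := by
        intro x _
        exact (Real.hasDerivAt_rpow_const (Or.inr hq)).hasDerivWithinAt
      have hbound : ∀ x ∈ Set.Icc (0:ℝ) (2 * v), ‖q * x ^ (q - 1)‖ ≤ q * (2 * v) ^ (q - 1) := by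
        intro x hx
        rw [Real.norm_eq_abs, abs_of_nonneg (mul_nonneg (by linarith) (Real.rpow_nonneg hx.1 _))]
        have := Real.rpow_le_rpow hx.1 hx.2 (by linarith : (0:ℝ) ≤ q - 1)
        nlinarith
      have := (convex_Icc (0:ℝ) (2 * v)).norm_image_sub_le_of_norm_hasDerivWithin_le
        hderiv hbound ⟨hv.le, by linarith⟩ ⟨hV, h2v⟩
      simpa [Real.norm_eq_abs] using this
    have h2v' : (2 * v) ^ (q - 1) = 2 ^ (q - 1) * v ^ (q - 1) :=
      Real.mul_rpow (by norm_num) hv.le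
    calc |V ^ q - v ^ q| ≤ (q * (2 * v) ^ (q - 1)) * |V - v| := hmvt
      _ = q * 2 ^ (q - 1) * v ^ (q - 1) * |V - v| := by rw [h2v']; ring
      _ ≤ _ := le_add_of_nonneg_right hB
  · have hw : v ≤ V - v := by linarith
    have hwpos : 0 < V - v := by linarith
    have hA : (0:ℝ) ≤ q * 2 ^ (q - 1) * v ^ (q - 1) * |V - v| := by positivity
    have habs : |V - v| = V - v := abs_of_pos hwpos
    have hvV : v ^ q ≤ V ^ q := Real.rpow_le_rpow hv.le (by linarith) (by linarith)
    have habs2 : |V ^ q - v ^ q| = V ^ q - v ^ q := abs_of_nonneg (by linarith)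
    have hVle : V ≤ 2 * (V - v) := by linarith
    have hVq : V ^ q ≤ (2 * (V - v)) ^ q := Real.rpow_le_rpow hV hVle (by linarith)
    have h2 : (2 * (V - v)) ^ q = 2 ^ q * (V - v) ^ q := Real.mul_rpow (by norm_num) hwpos.le
    have hvq : 0 ≤ v ^ q := by positivity
    calc |V ^ q - v ^ q| = V ^ q - v ^ q := habs2
      _ ≤ 2 ^ q * (V - v) ^ q := by rw [← h2]; linarith
      _ = 2 ^ q * |V - v| ^ q := by rw [habs]
      _ ≤ _ := le_add_of_nonneg_left hA

theorem add_rpow_le (a b p : ℝ) (ha : 0 ≤ a) (hb : 0 ≤ b) (hp : 1 ≤ p) :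
    (a + b) ^ p ≤ 2 ^ p * (a ^ p + b ^ p) := by
  have hmax : a + b ≤ 2 * max a b := by
    rcases le_total a b with h | h
    · simp [max_eq_right h]; linarith
    · simp [max_eq_left h]; linarith
  have h1 : (a + b) ^ p ≤ (2 * max a b) ^ p :=
    Real.rpow_le_rpow (by positivity) hmax (by linarith)
  have h2 : (2 * max a b) ^ p = 2 ^ p * (max a b) ^ p :=
    Real.mul_rpow (by norm_num) (le_max_of_le_left ha)
  have h3 : (max a b) ^ p ≤ a ^ p + b ^ p := by
    rcases le_total a b with h | h
    · rw [max_eq_right h]; have : 0 ≤ a ^ p := by positivity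
      linarith
    · rw [max_eq_left h]; have : 0 ≤ b ^ p := by positivity
      linarith
  calc (a + b) ^ p ≤ 2 ^ p * (max a b) ^ p := h2 ▸ h1
    _ ≤ 2 ^ p * (a ^ p + b ^ p) := by
        have : (0:ℝ) ≤ 2 ^ p := by positivity
        nlinarith

theorem key_pointwise (p q v V : ℝ) (hp : 1 ≤ p) (hq : 1 ≤ q) (hv : 0 < v) (hV : 0 ≤ V) :
    |V ^ q - v ^ q| ^ p ≤
      2 ^ p * (q * 2 ^ (q - 1)) ^ p * v ^ ((q - 1) * p) * |V - v| ^ p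
        + 2 ^ p * 2 ^ (q * p) * |V - v| ^ (p * q) := by
  set A := q * 2 ^ (q - 1) * v ^ (q - 1) * |V - v| with hA
  set B := (2:ℝ) ^ q * |V - v| ^ q with hB
  have hAnn : 0 ≤ A := by positivity
  have hBnn : 0 ≤ B := by positivity
  have h1 : |V ^ q - v ^ q| ≤ A + B := key_step1 q v V hq hv hV
  have h2 : |V ^ q - v ^ q| ^ p ≤ (A + B) ^ p :=
    Real.rpow_le_rpow (abs_nonneg _) h1 (by linarith)
  have h3 : (A + B) ^ p ≤ 2 ^ p * (A ^ p + B ^ p) := add_rpow_le A B p hAnn hBnn hp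
  have hAp : A ^ p = (q * 2 ^ (q - 1)) ^ p * v ^ ((q - 1) * p) * |V - v| ^ p := by
    rw [hA, Real.mul_rpow (by positivity) (abs_nonneg _),
      Real.mul_rpow (by positivity) (by positivity), ← Real.rpow_mul hv.le]
  have hBp : B ^ p = 2 ^ (q * p) * |V - v| ^ (p * q) := by
    rw [hB, Real.mul_rpow (by positivity) (by positivity),
      ← Real.rpow_mul (by norm_num : (0:ℝ) ≤ 2), ← Real.rpow_mul (abs_nonneg _), mul_comm q p]
  calc |V ^ q - v ^ q| ^ p ≤ 2 ^ p * (A ^ p + B ^ p) := le_trans h2 h3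
    _ = _ := by rw [hAp, hBp]; ring

/-- Converse direction: if for every `r ≥ 1` one has
`E|V(x) - v(x)|^r ≤ K_r v(x)^r h(x)^r` for all `x ≥ 1`, with `0 < h(x) ≤ 1`, then for
all `p, q ≥ 1` there is `K_{p,q}` with `E|V(x)^q - v(x)^q|^p ≤ K_{p,q} v(x)^{pq} h(x)^p`. -/
theorem pow_moment_bound_of_moment_bounds {Ω : Type*} [MeasurableSpace Ω]
    (μ : Measure Ω) [IsProbabilityMeasure μ]
    (V : ℝ → Ω → ℝ) (v h : ℝ → ℝ) (p q : ℝ) (hp : 1 ≤ p) (hq : 1 ≤ q)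
    (hV : ∀ x, 1 ≤ x → ∀ ω, 0 ≤ V x ω)
    (hv : ∀ x, 1 ≤ x → 0 < v x)
    (hh : ∀ x, 1 ≤ x → 0 < h x) (hh1 : ∀ x, 1 ≤ x → h x ≤ 1)
    (hyp : ∀ r : ℝ, 1 ≤ r → ∃ K : ℝ, ∀ x, 1 ≤ x →
      (∫⁻ ω, ENNReal.ofReal (|V x ω - v x| ^ r) ∂μ)
        ≤ ENNReal.ofReal (K * v x ^ r * h x ^ r)) :
    ∃ K : ℝ, ∀ x, 1 ≤ x →
      (∫⁻ ω, ENNReal.ofReal (|V x ω ^ q - v x ^ q| ^ p) ∂μ)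
        ≤ ENNReal.ofReal (K * v x ^ (p * q) * h x ^ p) := by
  have hp0 : (0:ℝ) < p := by linarith
  have hq0 : (0:ℝ) < q := by linarith
  obtain ⟨K1', hK1⟩ := hyp p hp
  have hpq1 : (1:ℝ) ≤ p * q := by nlinarith
  obtain ⟨K2', hK2⟩ := hyp (p * q) hpq1
  set C1 : ℝ := 2 ^ p * (q * 2 ^ (q - 1)) ^ p with hC1
  set C2 : ℝ := 2 ^ p * 2 ^ (q * p) with hC2
  have hC1pos : 0 < C1 := by rw [hC1]; positivity
  have hC2pos : 0 < C2 := by rw [hC2]; positivity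
  set K1 : ℝ := max K1' 0 with hK1def
  set K2 : ℝ := max K2' 0 with hK2def
  have hK1nn : 0 ≤ K1 := le_max_right _ _
  have hK2nn : 0 ≤ K2 := le_max_right _ _
  refine ⟨C1 * K1 + C2 * K2, fun x hx => ?_⟩
  have hvx := hv x hx
  have hhx := hh x hx
  have hh1x := hh1 x hx
  have hVx := hV x hx
  set d1 : ℝ := C1 * v x ^ ((q - 1) * p) with hd1
  have hd1pos : 0 < d1 := by rw [hd1]; positivity
  set G1 : ℝ≥0∞ → ℝ≥0∞ := fun t => ENNReal.ofReal d1 * t ^ p with hG1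
  set G2 : ℝ≥0∞ → ℝ≥0∞ := fun t => ENNReal.ofReal C2 * t ^ (p * q) with hG2
  set W : Ω → ℝ≥0∞ := fun ω => ENNReal.ofReal |V x ω - v x| with hW
  have hG1W : ∀ ω, G1 (W ω) = ENNReal.ofReal d1 * ENNReal.ofReal (|V x ω - v x| ^ p) := by
    intro ω
    simp only [hG1, hW]
    rw [ENNReal.ofReal_rpow_of_nonneg (abs_nonneg _) hp0.le]
  have hG2W : ∀ ω, G2 (W ω) = ENNReal.ofReal C2 * ENNReal.ofReal (|V x ω - v x| ^ (p * q)) := by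
    intro ω
    simp only [hG2, hW]
    rw [ENNReal.ofReal_rpow_of_nonneg (abs_nonneg _) (by positivity : (0:ℝ) ≤ p * q)]
  -- pointwise bound
  have hpt : ∀ ω, ENNReal.ofReal (|V x ω ^ q - v x ^ q| ^ p) ≤ G1 (W ω) + G2 (W ω) := by
    intro ω
    rw [hG1W, hG2W, ← ENNReal.ofReal_mul hd1pos.le, ← ENNReal.ofReal_mul hC2pos.le,
      ← ENNReal.ofReal_add (by positivity) (by positivity)]
    apply ENNReal.ofReal_le_ofReal
    have hkey := key_pointwise p q (v x) (V x ω) hp hq hvx (hVx ω)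
    calc |V x ω ^ q - v x ^ q| ^ p
        ≤ 2 ^ p * (q * 2 ^ (q - 1)) ^ p * v x ^ ((q - 1) * p) * |V x ω - v x| ^ p
          + 2 ^ p * 2 ^ (q * p) * |V x ω - v x| ^ (p * q) := hkey
      _ = d1 * |V x ω - v x| ^ p + C2 * |V x ω - v x| ^ (p * q) := by
          simp only [hd1, hC1, hC2]
  -- monotonicity / continuity / top for the subadditivity lemma
  have hmono1 : Monotone G1 := fun a b hab =>
    mul_le_mul_right (ENNReal.rpow_le_rpow hab hp0.le) _
  have hmono2 : Monotone G2 := fun a b hab =>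
    mul_le_mul_right (ENNReal.rpow_le_rpow hab (by positivity)) _
  have hcont : Continuous fun t => G1 t + G2 t := by
    apply Continuous.add
    · exact (ENNReal.continuous_const_mul ENNReal.ofReal_ne_top).comp
        ENNReal.continuous_rpow_const
    · exact (ENNReal.continuous_const_mul ENNReal.ofReal_ne_top).comp
        ENNReal.continuous_rpow_const
  have htop : G1 ⊤ + G2 ⊤ = ⊤ := by
    have : G1 ⊤ = ⊤ := by
      simp only [hG1]
      rw [ENNReal.top_rpow_of_pos hp0]
      exact ENNReal.mul_top (ne_of_gt (ENNReal.ofReal_pos.2 hd1pos))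
    simp [this]
  -- bound the two integrals
  have hint1 : ∫⁻ ω, G1 (W ω) ∂μ ≤ ENNReal.ofReal (d1 * (K1 * v x ^ p * h x ^ p)) := by
    calc ∫⁻ ω, G1 (W ω) ∂μ
        = ENNReal.ofReal d1 * ∫⁻ ω, ENNReal.ofReal (|V x ω - v x| ^ p) ∂μ := by
          simp only [hG1W]
          exact lintegral_const_mul' _ _ ENNReal.ofReal_ne_top
      _ ≤ ENNReal.ofReal d1 * ENNReal.ofReal (K1 * v x ^ p * h x ^ p) := by
          refine mul_le_mul_right (le_trans (hK1 x hx) (ENNReal.ofReal_le_ofReal ?_)) _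
          have : K1' ≤ K1 := le_max_left _ _
          have h1 : (0:ℝ) ≤ v x ^ p := by positivity
          have h2 : (0:ℝ) ≤ h x ^ p := by positivity
          exact mul_le_mul_of_nonneg_right (mul_le_mul_of_nonneg_right this h1) h2
      _ = ENNReal.ofReal (d1 * (K1 * v x ^ p * h x ^ p)) :=
          (ENNReal.ofReal_mul hd1pos.le).symm
  have hint2 : ∫⁻ ω, G2 (W ω) ∂μ
      ≤ ENNReal.ofReal (C2 * (K2 * v x ^ (p * q) * h x ^ (p * q))) := by
    calc ∫⁻ ω, G2 (W ω) ∂μ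
        = ENNReal.ofReal C2 * ∫⁻ ω, ENNReal.ofReal (|V x ω - v x| ^ (p * q)) ∂μ := by
          simp only [hG2W]
          exact lintegral_const_mul' _ _ ENNReal.ofReal_ne_top
      _ ≤ ENNReal.ofReal C2 * ENNReal.ofReal (K2 * v x ^ (p * q) * h x ^ (p * q)) := by
          refine mul_le_mul_right (le_trans (hK2 x hx) (ENNReal.ofReal_le_ofReal ?_)) _
          have : K2' ≤ K2 := le_max_left _ _
          have h1 : (0:ℝ) ≤ v x ^ (p * q) := by positivity
          have h2 : (0:ℝ) ≤ h x ^ (p * q) := by positivity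
          exact mul_le_mul_of_nonneg_right (mul_le_mul_of_nonneg_right this h1) h2
      _ = ENNReal.ofReal (C2 * (K2 * v x ^ (p * q) * h x ^ (p * q))) :=
          (ENNReal.ofReal_mul hC2pos.le).symm
  -- final arithmetic
  have ha : d1 * (K1 * v x ^ p * h x ^ p) = C1 * K1 * v x ^ (p * q) * h x ^ p := by
    have hvsum : v x ^ ((q - 1) * p) * v x ^ p = v x ^ (p * q) := by
      rw [← Real.rpow_add hvx]; ring_nf
    rw [hd1]
    calc C1 * v x ^ ((q - 1) * p) * (K1 * v x ^ p * h x ^ p)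
        = C1 * K1 * (v x ^ ((q - 1) * p) * v x ^ p) * h x ^ p := by ring
      _ = C1 * K1 * v x ^ (p * q) * h x ^ p := by rw [hvsum]
  have hble : C2 * (K2 * v x ^ (p * q) * h x ^ (p * q))
      ≤ C2 * K2 * v x ^ (p * q) * h x ^ p := by
    have hhle : h x ^ (p * q) ≤ h x ^ p :=
      Real.rpow_le_rpow_of_exponent_ge hhx hh1x (le_mul_of_one_le_right hp0.le hq)
    have h1 : (0:ℝ) ≤ C2 * K2 * v x ^ (p * q) := by positivity
    calc C2 * (K2 * v x ^ (p * q) * h x ^ (p * q))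
        = C2 * K2 * v x ^ (p * q) * h x ^ (p * q) := by ring
      _ ≤ C2 * K2 * v x ^ (p * q) * h x ^ p := by
          exact mul_le_mul_of_nonneg_left hhle h1
  calc (∫⁻ ω, ENNReal.ofReal (|V x ω ^ q - v x ^ q| ^ p) ∂μ)
      ≤ ∫⁻ ω, (G1 (W ω) + G2 (W ω)) ∂μ := lintegral_mono hpt
    _ ≤ (∫⁻ ω, G1 (W ω) ∂μ) + ∫⁻ ω, G2 (W ω) ∂μ :=
        lintegral_comp_add_le μ W G1 G2 hmono1 hmono2 hcont htop
    _ ≤ ENNReal.ofReal (d1 * (K1 * v x ^ p * h x ^ p))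
        + ENNReal.ofReal (C2 * (K2 * v x ^ (p * q) * h x ^ (p * q))) := add_le_add hint1 hint2
    _ = ENNReal.ofReal (d1 * (K1 * v x ^ p * h x ^ p)
        + C2 * (K2 * v x ^ (p * q) * h x ^ (p * q))) :=
        (ENNReal.ofReal_add (by positivity) (by positivity)).symm
    _ ≤ ENNReal.ofReal ((C1 * K1 + C2 * K2) * v x ^ (p * q) * h x ^ p) := by
        apply ENNReal.ofReal_le_ofReal
        rw [ha]
        nlinarith [hble]
end
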